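/- Let P be a program over 𝒰, A ⊆ 𝒰, and S ⊆ Ā, and suppose P does not satisfy criterion Ω_{A,S}. Let Q be a program over 𝒰 ∖ A such that SE^{Ā,S}(Q) = {⟨X,Y⟩ : Y ⊆ 𝒰 ∖ A and X ∈ ⋂𝓡^Y_{⟨P,A,S⟩}}. Then AS(Q ∪ R) = AS(P ∪ R)_{|Ā} for every program R over S (Q satisfies relativized strong persistence (rSP)_{⟨P,A,S⟩}). -/
import Mathlib


/-- An extended rule over a type of atoms: head, positive body, negative body,
double-negated body. -/
structure ASPRule (Atom : Type) where
  head : Finset Atom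
  pos : Finset Atom
  neg : Finset Atom
  nneg : Finset Atom
deriving DecidableEq

/-- A program is a finite set of rules. -/
abbrev ASPProgram (Atom : Type) [DecidableEq Atom] := Finset (ASPRule Atom)

section Defs

variable {Atom : Type} [DecidableEq Atom] [Fintype Atom]

/-- A rule is over `S` if all its atoms lie in `S`. -/
def ruleOver (r : ASPRule Atom) (S : Finset Atom) : Prop :=
  r.head ⊆ S ∧ r.pos ⊆ S ∧ r.neg ⊆ S ∧ r.nneg ⊆ S

/-- A program is over `S` if all its rules are over `S`. -/
def progOver (P : ASPProgram Atom) (S : Finset Atom) : Prop :=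
  ∀ r ∈ P, ruleOver r S

/-- `I` satisfies (is a model of) rule `r`. -/
def satRule (I : Finset Atom) (r : ASPRule Atom) : Prop :=
  ((r.head ∪ r.neg) ∩ I).Nonempty ∨ ¬ (r.pos ∪ r.nneg ⊆ I)

/-- `I` is a model of program `P`. -/
def sat (I : Finset Atom) (P : ASPProgram Atom) : Prop :=
  ∀ r ∈ P, satRule I r

/-- The GL-reduct `P^I`. -/
def reduct (P : ASPProgram Atom) (I : Finset Atom) : ASPProgram Atom :=
  (P.filter (fun r => r.neg ∩ I = ∅ ∧ r.nneg ⊆ I)).image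
    (fun r => ⟨r.head, r.pos, ∅, ∅⟩)

/-- The answer sets of `P`: minimal models of the reduct. -/
def AS (P : ASPProgram Atom) : Set (Finset Atom) :=
  {I | sat I (reduct P I) ∧ ∀ J ⊂ I, ¬ sat J (reduct P I)}

/-- Projection of a program onto `𝒰 ∖ A`: rules with a head or negative-body atom
from `A` are dropped; in the remaining rules the atoms of `A` are removed from the
positive and double-negated bodies. -/
def projAway (P : ASPProgram Atom) (A : Finset Atom) : ASPProgram Atom :=
  (P.filter (fun r => r.neg ∩ A = ∅ ∧ r.head ∩ A = ∅)).image
    (fun r => ⟨r.head, r.pos \ A, r.neg, r.nneg \ A⟩)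

/-- `R` is `A`-separated: a union of a program over `𝒰 ∖ A` and a program over `A`. -/
def ASeparated (R : ASPProgram Atom) (A : Finset Atom) : Prop :=
  ∃ R₁ R₂ : ASPProgram Atom, R = R₁ ∪ R₂ ∧ progOver R₁ Aᶜ ∧ progOver R₂ A

/-- The defining equation of a (strong) `A`-simplification of `P` relative to `B`:
`AS(P ∪ R)_{|Ā} = AS(Q ∪ R_{|Ā})` for every `A`-separated program `R` over `B`. -/
def SimpEq (P : ASPProgram Atom) (A B : Finset Atom) (Q : ASPProgram Atom) : Prop :=
  ∀ R : ASPProgram Atom, progOver R B → ASeparated R A →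
    (fun I => I \ A) '' AS (P ∪ R) = AS (Q ∪ projAway R A)

/-- The SE-models of `P`. -/
def SE (P : ASPProgram Atom) : Set (Finset Atom × Finset Atom) :=
  {p | p.1 ⊆ p.2 ∧ sat p.2 P ∧ sat p.1 (reduct P p.2)}

/-- The (relativized) `B`-SE-models of `P`. -/
def SEB (B : Finset Atom) (P : ASPProgram Atom) : Set (Finset Atom × Finset Atom) :=
  {p | (p.1 = p.2 ∨ p.1 ⊂ p.2 ∩ B) ∧ sat p.2 P ∧
    (∀ Y' ⊂ p.2, Y' ∩ B = p.2 ∩ B → ¬ sat Y' (reduct P p.2)) ∧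
    (p.1 ⊂ p.2 → ∃ X' ⊆ p.2, X' ∩ B = p.1 ∧ sat X' (reduct P p.2))}

/-- `SE^{A₁,A₂}(P)`: the `A₂`-SE-models `⟨X,Y⟩` of `P` with `Y ⊆ A₁`. -/
def SERel (P : ASPProgram Atom) (A₁ A₂ : Finset Atom) : Set (Finset Atom × Finset Atom) :=
  {p | p ∈ SEB A₂ P ∧ p.2 ⊆ A₁}

/-- `P` satisfies `Δʳ` for `A`, `B`. -/
def DeltaR (P : ASPProgram Atom) (A B : Finset Atom) : Prop :=
  (∀ Y : Finset Atom, (Y, Y) ∈ SEB B P → A ∩ B ⊆ Y) ∧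
  (∀ X Y : Finset Atom, (X, Y) ∈ SE P → (Y, Y) ∈ SEB B P → X \ A = Y \ A → X = Y) ∧
  (∀ X Y : Finset Atom, (X, Y) ∈ SEB B P → (X ∪ (Y ∩ A ∩ B), Y) ∈ SEB B P)

/-- The family `𝓡^Y_{⟨P,A,B⟩}`. -/
def RFam (P : ASPProgram Atom) (A B Y : Finset Atom) : Set (Set (Finset Atom)) :=
  {S | ∃ A' ⊆ A, (Y ∪ A', Y ∪ A') ∈ SEB B P ∧
    S = {Z | ∃ X : Finset Atom, (X, Y ∪ A') ∈ SEB B P ∧ Z = X \ A}}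

/-- `P` satisfies criterion `Ω_{A,B}`: for some `Y ⊆ 𝒰 ∖ A` the family
`𝓡^Y_{⟨P,A,B⟩}` is non-empty and has no `⊆`-least element. -/
def OmegaCrit (P : ASPProgram Atom) (A B : Finset Atom) : Prop :=
  ∃ Y : Finset Atom, Y ⊆ Aᶜ ∧ (RFam P A B Y).Nonempty ∧
    ¬ ∃ S ∈ RFam P A B Y, ∀ T ∈ RFam P A B Y, S ⊆ T

/-- `⋂ 𝓡^Y_{⟨P,A,B⟩}`, taken to be `∅` when the family is empty. -/
def RInter (P : ASPProgram Atom) (A B Y : Finset Atom) : Set (Finset Atom) :=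
  {X | (RFam P A B Y).Nonempty ∧ ∀ S ∈ RFam P A B Y, X ∈ S}

/-- The `A`-`B`-SE-models `SE^B_A(P)` of `P`. -/
def SEBA (P : ASPProgram Atom) (A B : Finset Atom) : Set (Finset Atom × Finset Atom) :=
  {p | ∃ Y : Finset Atom, (Y, Y) ∈ SEB B P ∧ p = (Y \ A, Y \ A)} ∪
  {p | ∃ X Y : Finset Atom, (X, Y) ∈ SEB B P ∧ X ⊂ Y ∧
    (∀ Y' : Finset Atom, (Y', Y') ∈ SEB B P → Y' \ A = Y \ A →
      ∃ X' : Finset Atom, (X', Y') ∈ SEB B P ∧ X' \ A = X \ A) ∧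
    p = (X \ A, Y \ A)}

end Defs


set_option linter.unusedSectionVars false
section AuxLemmas

variable {Atom : Type} [DecidableEq Atom] [Fintype Atom]

lemma auxInter {X T I J : Finset Atom} (hX : X ⊆ T) (h : I ∩ T = J ∩ T) :
    X ∩ I = X ∩ J := by
  ext a
  simp only [Finset.mem_inter]
  constructor
  · rintro ⟨ha, hai⟩
    refine ⟨ha, ?_⟩
    have hm : a ∈ J ∩ T := by rw [← h]; exact Finset.mem_inter.mpr ⟨hai, hX ha⟩
    exact (Finset.mem_inter.mp hm).1
  · rintro ⟨ha, hai⟩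
    refine ⟨ha, ?_⟩
    have hm : a ∈ I ∩ T := by rw [h]; exact Finset.mem_inter.mpr ⟨hai, hX ha⟩
    exact (Finset.mem_inter.mp hm).1

lemma auxSubset {X T I J : Finset Atom} (hX : X ⊆ T) (h : I ∩ T = J ∩ T) :
    (X ⊆ I ↔ X ⊆ J) := by
  have e := auxInter hX h
  constructor
  · intro hXI a ha
    have hm : a ∈ X ∩ J := by rw [← e]; exact Finset.mem_inter.mpr ⟨ha, hXI ha⟩
    exact (Finset.mem_inter.mp hm).2
  · intro hXJ a ha
    have hm : a ∈ X ∩ I := by rw [e]; exact Finset.mem_inter.mpr ⟨ha, hXJ ha⟩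
    exact (Finset.mem_inter.mp hm).2

lemma satRule_congr {r : ASPRule Atom} {T I J : Finset Atom}
    (hr : ruleOver r T) (h : I ∩ T = J ∩ T) : satRule I r ↔ satRule J r := by
  obtain ⟨h1, h2, h3, h4⟩ := hr
  unfold satRule
  rw [auxInter (Finset.union_subset h1 h3) h, auxSubset (Finset.union_subset h2 h4) h]

lemma sat_congr {P : ASPProgram Atom} {T I J : Finset Atom}
    (hP : progOver P T) (h : I ∩ T = J ∩ T) : sat I P ↔ sat J P :=
  ⟨fun hs r hr => (satRule_congr (hP r hr) h).mp (hs r hr),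
   fun hs r hr => (satRule_congr (hP r hr) h).mpr (hs r hr)⟩

lemma reduct_progOver {P : ASPProgram Atom} {T I : Finset Atom}
    (hP : progOver P T) : progOver (reduct P I) T := by
  intro r hr
  simp only [reduct, Finset.mem_image, Finset.mem_filter] at hr
  obtain ⟨s, ⟨hs, _⟩, rfl⟩ := hr
  exact ⟨(hP s hs).1, (hP s hs).2.1, Finset.empty_subset _, Finset.empty_subset _⟩

lemma reduct_congr {P : ASPProgram Atom} {T I J : Finset Atom}
    (hP : progOver P T) (h : I ∩ T = J ∩ T) : reduct P I = reduct P J := by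
  unfold reduct
  congr 1
  apply Finset.filter_congr
  intro r hr
  obtain ⟨_, _, h3, h4⟩ := hP r hr
  rw [auxInter h3 h, auxSubset h4 h]

lemma sat_reduct_self {P : ASPProgram Atom} {I : Finset Atom} :
    sat I P ↔ sat I (reduct P I) := by
  constructor
  · intro hs r hr
    simp only [reduct, Finset.mem_image, Finset.mem_filter] at hr
    obtain ⟨s, ⟨hsP, hneg, hnneg⟩, rfl⟩ := hr
    rcases hs s hsP with h | h
    · left
      rw [Finset.union_inter_distrib_right, hneg, Finset.union_empty] at h
      simpa using h
    · right
      intro hsub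
      simp only [Finset.union_empty] at hsub
      exact h (Finset.union_subset hsub hnneg)
  · intro hs r hr
    by_cases hneg : r.neg ∩ I = ∅
    · by_cases hnneg : r.nneg ⊆ I
      · have hmem : (⟨r.head, r.pos, ∅, ∅⟩ : ASPRule Atom) ∈ reduct P I := by
          simp only [reduct, Finset.mem_image, Finset.mem_filter]
          exact ⟨r, ⟨hr, hneg, hnneg⟩, rfl⟩
        rcases hs _ hmem with h | h
        · left
          exact h.mono (Finset.inter_subset_inter (by simp) le_rfl)
        · right
          intro hsub
          exact h (by simpa using (Finset.union_subset_iff.mp hsub).1)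
      · right
        intro hsub
        exact hnneg ((Finset.subset_union_right).trans hsub)
    · left
      obtain ⟨a, ha⟩ := Finset.nonempty_iff_ne_empty.mpr hneg
      exact ⟨a, Finset.mem_inter.mpr ⟨Finset.mem_union_right _ (Finset.mem_inter.mp ha).1,
        (Finset.mem_inter.mp ha).2⟩⟩

lemma sat_union {P R : ASPProgram Atom} {I : Finset Atom} :
    sat I (P ∪ R) ↔ sat I P ∧ sat I R := by
  constructor
  · intro h
    exact ⟨fun r hr => h r (Finset.mem_union_left _ hr),
      fun r hr => h r (Finset.mem_union_right _ hr)⟩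
  · rintro ⟨h1, h2⟩ r hr
    rcases Finset.mem_union.mp hr with h | h
    · exact h1 r h
    · exact h2 r h

lemma reduct_union {P R : ASPProgram Atom} {I : Finset Atom} :
    reduct (P ∪ R) I = reduct P I ∪ reduct R I := by
  unfold reduct
  rw [Finset.filter_union, Finset.image_union]

end AuxLemmas
set_option linter.unusedSectionVars false

section AuxLemmas2

variable {Atom : Type} [DecidableEq Atom] [Fintype Atom]

lemma ssub_subset {s t : Finset Atom} (h : s ⊂ t) : s ⊆ t := by
  rw [Finset.ssubset_def] at h; exact h.1

lemma ssub_not {s t : Finset Atom} (h : s ⊂ t) : ¬ t ⊆ s := by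
  rw [Finset.ssubset_def] at h; exact h.2

lemma ssub_mk {s t : Finset Atom} (h1 : s ⊆ t) (h2 : ¬ t ⊆ s) : s ⊂ t := by
  rw [Finset.ssubset_def]; exact ⟨h1, h2⟩

lemma ssub_ne {s t : Finset Atom} (h1 : s ⊆ t) (h2 : s ≠ t) : s ⊂ t :=
  ssub_mk h1 (fun h => h2 (Finset.Subset.antisymm h1 h))

lemma not_ssub_self (s : Finset Atom) : ¬ s ⊂ s := fun h => ssub_not h le_rfl

lemma mem_SEB_iff {P₀ : ASPProgram Atom} {B X Y : Finset Atom} :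
    (X, Y) ∈ SEB B P₀ ↔ ((X = Y ∨ X ⊂ Y ∩ B) ∧ sat Y P₀ ∧
      (∀ Y' ⊂ Y, Y' ∩ B = Y ∩ B → ¬ sat Y' (reduct P₀ Y)) ∧
      (X ⊂ Y → ∃ X' ⊆ Y, X' ∩ B = X ∧ sat X' (reduct P₀ Y))) := Iff.rfl

end AuxLemmas2

/-- if `P` does not satisfy `Ω_{A,S}` and the relativized SE-models of
`Q` match `⋂𝓡^Y_{⟨P,A,S⟩}`, then `Q` satisfies (rSP)_{⟨P,A,S⟩}. -/
theorem stmt14 {Atom : Type} [DecidableEq Atom] [Fintype Atom]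
    (P Q : ASPProgram Atom) (A S : Finset Atom) (hS : S ⊆ Aᶜ)
    (hOm : ¬ OmegaCrit P A S) (hQ : progOver Q Aᶜ)
    (hSE : SERel Q Aᶜ S =
      {p : Finset Atom × Finset Atom | p.2 ⊆ Aᶜ ∧ p.1 ∈ RInter P A S p.2}) :
    ∀ R : ASPProgram Atom, progOver R S →
      AS (Q ∪ R) = (fun I => I \ A) '' AS (P ∪ R) := by
  intro R hR
  have hSA : ∀ a ∈ S, a ∉ A := fun a ha => Finset.mem_compl.mp (hS ha)
  have hRc : progOver R Aᶜ := fun r hr =>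
    ⟨(hR r hr).1.trans hS, (hR r hr).2.1.trans hS, (hR r hr).2.2.1.trans hS,
      (hR r hr).2.2.2.trans hS⟩
  have interS : ∀ J : Finset Atom, (J \ A) ∩ S = J ∩ S := by
    intro J; ext a
    simp only [Finset.mem_inter, Finset.mem_sdiff]
    exact ⟨fun h => ⟨h.1.1, h.2⟩, fun h => ⟨⟨h.1, hSA a h.2⟩, h.2⟩⟩
  have sdiffSelf : ∀ X : Finset Atom, (∀ a ∈ X, a ∉ A) → X \ A = X := by
    intro X hX; ext a
    simp only [Finset.mem_sdiff]
    exact ⟨fun h => h.1, fun h => ⟨h, hX a h⟩⟩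
  have hLeast : ∀ Y : Finset Atom, Y ⊆ Aᶜ → (RFam P A S Y).Nonempty →
      ∃ L ∈ RFam P A S Y, ∀ T ∈ RFam P A S Y, L ⊆ T := by
    intro Y h1 h2
    by_contra hcon
    exact hOm ⟨Y, h1, h2, hcon⟩
  have selfSEB : ∀ (P₀ : ASPProgram Atom) (J : Finset Atom),
      sat J (reduct (P₀ ∪ R) J) → (∀ Z ⊂ J, ¬ sat Z (reduct (P₀ ∪ R) J)) →
      (J, J) ∈ SEB S P₀ := by
    intro P₀ J hsat hmin
    rw [reduct_union, sat_union] at hsat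
    rw [mem_SEB_iff]
    refine ⟨Or.inl rfl, sat_reduct_self.mpr hsat.1, ?_, ?_⟩
    · intro Y' hY'sub hY'S hsatY'
      refine hmin Y' hY'sub ?_
      rw [reduct_union, sat_union]
      exact ⟨hsatY', (sat_congr (reduct_progOver hR) hY'S).mpr hsat.2⟩
    · intro h
      exact absurd h (not_ssub_self J)
  ext I
  simp only [Set.mem_image]
  constructor
  · -- I ∈ AS (Q ∪ R) → ∃ J ∈ AS (P ∪ R), J \ A = I
    rintro ⟨hsatI, hminI⟩
    have hQRc : progOver (Q ∪ R) Aᶜ := fun r hr => by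
      rcases Finset.mem_union.mp hr with h | h
      · exact hQ r h
      · exact hRc r h
    -- I contains no atom of A
    have hIA : ∀ a ∈ I, a ∉ A := by
      by_contra hcon
      push_neg at hcon
      obtain ⟨a, haI, haA⟩ := hcon
      have hss : I \ A ⊂ I :=
        ssub_mk Finset.sdiff_subset
          (fun h => (Finset.mem_sdiff.mp (h haI)).2 haA)
      have hcng : (I \ A) ∩ Aᶜ = I ∩ Aᶜ := by
        ext b
        simp only [Finset.mem_inter, Finset.mem_sdiff, Finset.mem_compl]
        exact ⟨fun h => ⟨h.1.1, h.2⟩, fun h => ⟨⟨h.1, h.2⟩, h.2⟩⟩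
      exact hminI (I \ A) hss
        ((sat_congr (reduct_progOver hQRc) hcng).mpr hsatI)
    have hIcA : I ⊆ Aᶜ := fun a ha => Finset.mem_compl.mpr (hIA a ha)
    have hsatI' := hsatI
    rw [reduct_union, sat_union] at hsatI'
    have hIQ : (I, I) ∈ SEB S Q := selfSEB Q I hsatI hminI
    have hRI : I ∈ RInter P A S I :=
      ((Set.ext_iff.mp hSE (I, I)).mp ⟨hIQ, hIcA⟩).2
    have hNE : (RFam P A S I).Nonempty := hRI.1
    obtain ⟨L, hLmem, hLleast⟩ := hLeast I hIcA hNE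
    obtain ⟨A', hA'A, hJJ, hLdef⟩ := hLmem
    rw [mem_SEB_iff] at hJJ
    set J := I ∪ A' with hJdef
    have hJI : J ∩ S = I ∩ S := by
      ext a
      simp only [hJdef, Finset.mem_inter, Finset.mem_union]
      constructor
      · rintro ⟨h | h, hs⟩
        · exact ⟨h, hs⟩
        · exact absurd (hA'A h) (hSA a hs)
      · rintro ⟨h, hs⟩
        exact ⟨Or.inl h, hs⟩
    have hJA : J \ A = I := by
      ext a
      simp only [hJdef, Finset.mem_sdiff, Finset.mem_union]
      constructor
      · rintro ⟨h | h, hna⟩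
        · exact h
        · exact absurd (hA'A h) hna
      · intro h
        exact ⟨Or.inl h, hIA a h⟩
    have hsatJR : sat J (reduct R J) :=
      sat_reduct_self.mp ((sat_congr hR hJI).mpr (sat_reduct_self.mpr hsatI'.2))
    refine ⟨J, ⟨?_, ?_⟩, hJA⟩
    · rw [reduct_union, sat_union]
      exact ⟨sat_reduct_self.mp hJJ.2.1, hsatJR⟩
    · intro Z hZJ hsatZ
      rw [reduct_union, sat_union] at hsatZ
      by_cases hcase : Z ∩ S = J ∩ S
      · exact hJJ.2.2.1 Z hZJ hcase hsatZ.1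
      · have hss0 : Z ∩ S ⊂ J ∩ S :=
          ssub_ne (Finset.inter_subset_inter (ssub_subset hZJ) le_rfl) hcase
        have hXJ : (Z ∩ S, J) ∈ SEB S P := by
          rw [mem_SEB_iff]
          exact ⟨Or.inr hss0, hJJ.2.1, hJJ.2.2.1,
            fun _ => ⟨Z, ssub_subset hZJ, rfl, hsatZ.1⟩⟩
        have hXd : (Z ∩ S) \ A = Z ∩ S :=
          sdiffSelf _ (fun a ha => hSA a (Finset.mem_inter.mp ha).2)
        have hXL : Z ∩ S ∈ L := by
          rw [hLdef]
          exact ⟨Z ∩ S, hXJ, hXd.symm⟩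
        have hXR : Z ∩ S ∈ RInter P A S I :=
          ⟨hNE, fun T hT => hLleast T hT hXL⟩
        have hXQ : (Z ∩ S, I) ∈ SEB S Q :=
          ((Set.ext_iff.mp hSE (Z ∩ S, I)).mpr ⟨hIcA, hXR⟩).1
        rw [mem_SEB_iff] at hXQ
        rcases hXQ.1 with heq | hssI
        · exfalso
          have h1 : I ⊆ S := heq ▸ (Finset.inter_subset_right (s₁ := Z))
          have h2 : I ∩ S = I := Finset.inter_eq_left.mpr h1
          rw [heq, hJI, h2] at hss0
          exact not_ssub_self I hss0
        · have hXI : Z ∩ S ⊂ I :=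
            ssub_mk ((ssub_subset hssI).trans Finset.inter_subset_left)
              (fun hIZ => ssub_not hssI
                (fun a ha => hIZ (Finset.mem_inter.mp ha).1))
          obtain ⟨X', hX'I, hX'S, hX'Q⟩ := hXQ.2.2.2 hXI
          have eRJ : reduct R I = reduct R J := reduct_congr hR hJI.symm
          have hX'R : sat X' (reduct R I) := by
            rw [eRJ]
            exact (sat_congr (reduct_progOver hR) hX'S).mpr hsatZ.2
          have hX'lt : X' ⊂ I :=
            ssub_mk hX'I (fun hIX' => ssub_not hssI
              (fun a ha => by
                rw [← hX'S]
                exact Finset.mem_inter.mpr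
                  ⟨hIX' (Finset.mem_inter.mp ha).1, (Finset.mem_inter.mp ha).2⟩))
          refine hminI X' hX'lt ?_
          rw [reduct_union, sat_union]
          exact ⟨hX'Q, hX'R⟩
  · -- J ∈ AS (P ∪ R) → J \ A ∈ AS (Q ∪ R)
    rintro ⟨J, ⟨hsatJ, hminJ⟩, rfl⟩
    have hsatJ' := hsatJ
    rw [reduct_union, sat_union] at hsatJ'
    have hJP : (J, J) ∈ SEB S P := selfSEB P J hsatJ hminJ
    rw [mem_SEB_iff] at hJP
    set Y := J \ A with hYdef
    have hYA : ∀ a ∈ Y, a ∉ A := fun a ha => (Finset.mem_sdiff.mp ha).2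
    have hYcA : Y ⊆ Aᶜ := fun a ha => Finset.mem_compl.mpr (hYA a ha)
    have hYS : Y ∩ S = J ∩ S := interS J
    have hYJ : Y ∪ (J ∩ A) = J := by
      ext a
      simp only [hYdef, Finset.mem_union, Finset.mem_sdiff, Finset.mem_inter]
      constructor
      · rintro (h | h)
        · exact h.1
        · exact h.1
      · intro h
        by_cases ha : a ∈ A
        · exact Or.inr ⟨h, ha⟩
        · exact Or.inl ⟨h, ha⟩
    have hJPmem : (Y ∪ (J ∩ A), Y ∪ (J ∩ A)) ∈ SEB S P := by
      rw [hYJ]; rw [mem_SEB_iff]; exact hJP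
    have hT₀ : {W | ∃ X : Finset Atom, (X, Y ∪ (J ∩ A)) ∈ SEB S P ∧ W = X \ A}
        ∈ RFam P A S Y :=
      ⟨J ∩ A, Finset.inter_subset_right, hJPmem, rfl⟩
    have hNE : (RFam P A S Y).Nonempty := ⟨_, hT₀⟩
    have hYR : Y ∈ RInter P A S Y := by
      refine ⟨hNE, ?_⟩
      rintro T ⟨A'', hA''A, hself, rfl⟩
      refine ⟨Y ∪ A'', hself, ?_⟩
      ext a
      simp only [Finset.mem_sdiff, Finset.mem_union]
      constructor
      · intro h
        exact ⟨Or.inl h, hYA a h⟩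
      · rintro ⟨h | h, hna⟩
        · exact h
        · exact absurd (hA''A h) hna
    have hYQ : (Y, Y) ∈ SEB S Q :=
      ((Set.ext_iff.mp hSE (Y, Y)).mpr ⟨hYcA, hYR⟩).1
    rw [mem_SEB_iff] at hYQ
    have eRY : reduct R Y = reduct R J := reduct_congr hR hYS
    refine ⟨?_, ?_⟩
    · rw [reduct_union, sat_union]
      refine ⟨sat_reduct_self.mp hYQ.2.1, ?_⟩
      rw [eRY]
      exact (sat_congr (reduct_progOver hR) hYS).mpr hsatJ'.2
    · intro Z hZY hsatZ
      rw [reduct_union, sat_union] at hsatZ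
      by_cases hcase : Z ∩ S = Y ∩ S
      · exact hYQ.2.2.1 Z hZY hcase hsatZ.1
      · have hss0 : Z ∩ S ⊂ Y ∩ S :=
          ssub_ne (Finset.inter_subset_inter (ssub_subset hZY) le_rfl) hcase
        have hXY : (Z ∩ S, Y) ∈ SEB S Q := by
          rw [mem_SEB_iff]
          exact ⟨Or.inr hss0, hYQ.2.1, hYQ.2.2.1,
            fun _ => ⟨Z, ssub_subset hZY, rfl, hsatZ.1⟩⟩
        have hXR : Z ∩ S ∈ RInter P A S Y :=
          ((Set.ext_iff.mp hSE (Z ∩ S, Y)).mp ⟨hXY, hYcA⟩).2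
        obtain ⟨X₀, hX₀, hX₀d⟩ := hXR.2 _ hT₀
        rw [hYJ] at hX₀
        rw [mem_SEB_iff] at hX₀
        rcases hX₀.1 with heq | hssX
        · exfalso
          rw [heq] at hX₀d
          rw [hX₀d] at hss0
          exact ssub_not hss0 Finset.inter_subset_left
        · have hX₀S : X₀ ⊆ S := (ssub_subset hssX).trans Finset.inter_subset_right
          have hX₀A : X₀ \ A = X₀ := sdiffSelf _ (fun a ha => hSA a (hX₀S ha))
          rw [hX₀A] at hX₀d
          rw [← hX₀d] at hssX
          have hXJlt : Z ∩ S ⊂ J :=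
            ssub_mk ((ssub_subset hssX).trans Finset.inter_subset_left)
              (fun h => ssub_not hssX
                (fun a ha => h (Finset.mem_inter.mp ha).1))
          rw [← hX₀d] at hX₀
          obtain ⟨X', hX'J, hX'S, hX'P⟩ := hX₀.2.2.2 hXJlt
          have hX'R : sat X' (reduct R J) := by
            have hZRJ : sat Z (reduct R J) := by rw [← eRY]; exact hsatZ.2
            exact (sat_congr (reduct_progOver hR) hX'S).mpr hZRJ
          have hX'lt : X' ⊂ J :=
            ssub_mk hX'J (fun hJX' => ssub_not hssX
              (fun a ha => by
                rw [← hX'S]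
                exact Finset.mem_inter.mpr
                  ⟨hJX' (Finset.mem_inter.mp ha).1, (Finset.mem_inter.mp ha).2⟩))
          refine hminJ X' hX'lt ?_
          rw [reduct_union, sat_union]
          exact ⟨hX'P, hX'R⟩
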